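/- The determinant of the pair of coefficient vectors of two singular vectors at an intersection point vanishes if and only if ∏ p_i^{n_i−k_i^1} = ∏ p_i^{n_i−k_i^2}, which (since the p_i are distinct primes) holds if and only if π^1 = π^2. -/

import Mathlib

/-!
Write the coefficient vectors as `(aⱼ t + bⱼ, 4 aⱼ t)` with `aⱼ = 2ⁿ ∏ pᵢ^{kᵢʲ}` and
`bⱼ = ∏ pᵢ^{nᵢ-kᵢʲ}`. Their determinant is `4t (a₂b₁ - a₁b₂)`, and `t ≠ 0`. Since
`a₁b₁ = a₂b₂ = 2ⁿ ∏ pᵢ^{nᵢ}`, the identity `a₂b₁ = a₁b₂` becomes `b₁² = b₂²` after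
multiplying by `b₁b₂`, i.e. `b₁ = b₂`. Finally, by unique factorisation, `bⱼ` determines
the exponents `nᵢ - kᵢʲ` and hence `πʲ`.
-/

open Finset

section PrimePowers

variable {ι : Type*} [Fintype ι] {p : ι → ℕ}

lemma factorization_prod_pow_apply (hp : ∀ i, (p i).Prime) (hinj : Function.Injective p)
    (c : ι → ℕ) (j : ι) : (∏ i, p i ^ c i).factorization (p j) = c j := by
  classical
  rw [Nat.factorization_prod fun i _ => pow_ne_zero _ (hp i).ne_zero,
    Finsupp.finsetSum_apply, Finset.sum_eq_single j]
  · simp [(hp j).factorization_pow]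
  · intro i _ hij
    rw [(hp i).factorization_pow, Finsupp.single_apply, if_neg fun h => hij (hinj h)]
  · simp

lemma prod_pow_injective (hp : ∀ i, (p i).Prime) (hinj : Function.Injective p) :
    Function.Injective fun c : ι → ℕ => ∏ i, p i ^ c i := fun a b h => funext fun j => by
  simpa only [factorization_prod_pow_apply hp hinj] using
    congrArg (fun m => m.factorization (p j)) h

lemma prod_pow_sub_eq_iff (hp : ∀ i, (p i).Prime) (hinj : Function.Injective p)
    {e k₁ k₂ : ι → ℕ} (hk₁ : ∀ i, k₁ i ≤ e i) (hk₂ : ∀ i, k₂ i ≤ e i) :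
    ∏ i, p i ^ (e i - k₁ i) = ∏ i, p i ^ (e i - k₂ i) ↔ k₁ = k₂ := by
  refine ⟨fun h => funext fun i => ?_, fun h => h ▸ rfl⟩
  exact (tsub_right_inj (hk₁ i) (hk₂ i)).1 (congrFun (prod_pow_injective hp hinj h) i)

end PrimePowers

lemma prod_pow_mul_prod_pow_sub {ι M : Type*} [Fintype ι] [CommMonoid M] (p : ι → M)
    {e k : ι → ℕ} (hk : ∀ i, k i ≤ e i) :
    (∏ i, p i ^ k i) * ∏ i, p i ^ (e i - k i) = ∏ i, p i ^ e i := by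
  simp only [← prod_mul_distrib, ← pow_add, Nat.add_sub_cancel' (hk _)]

lemma det_coeff_vectors_eq_zero_iff {K : Type*} [Field K] [LinearOrder K] [IsStrictOrderedRing K]
    {a₁ a₂ b₁ b₂ t : K} (ht : t ≠ 0) (ha₁ : a₁ ≠ 0) (hb₁ : 0 < b₁) (hb₂ : 0 < b₂)
    (hab : a₁ * b₁ = a₂ * b₂) :
    (a₁ * t + b₁) * (4 * a₂ * t) - (a₂ * t + b₂) * (4 * a₁ * t) = 0 ↔ b₁ = b₂ := by
  have hc : a₁ * b₁ ≠ 0 := mul_ne_zero ha₁ hb₁.ne'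
  have hdet : (a₁ * t + b₁) * (4 * a₂ * t) - (a₂ * t + b₂) * (4 * a₁ * t)
      = 4 * t * (a₂ * b₁ - a₁ * b₂) := by ring
  have hscaled : a₂ * b₁ * (b₁ * b₂) = a₁ * b₂ * (b₁ * b₂) ↔ b₁ ^ 2 = b₂ ^ 2 := by
    rw [show a₂ * b₁ * (b₁ * b₂) = a₁ * b₁ * b₁ ^ 2 by rw [hab]; ring,
      show a₁ * b₂ * (b₁ * b₂) = a₁ * b₁ * b₂ ^ 2 by ring, mul_right_inj' hc]
  rw [hdet, mul_eq_zero, or_iff_right (mul_ne_zero four_ne_zero ht), sub_eq_zero,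
    ← mul_left_inj' (mul_pos hb₁ hb₂).ne', hscaled, sq_eq_sq₀ hb₁.le hb₂.le]

theorem stmt_6_general (n P : ℕ) (p e : Fin P → ℕ)
    (hp : ∀ i, (p i).Prime)
    (hinj : Function.Injective p)
    (k1 k2 : Fin P → ℕ) (hk1 : ∀ i, k1 i ≤ e i) (hk2 : ∀ i, k2 i ≤ e i)
    (t : ℝ)
    (ht : t = ((2 : ℝ) ^ n)⁻¹ * ∏ i, (p i : ℝ) ^ ((e i : ℤ) - k1 i - k2 i)
      ∨ t = -(((2 : ℝ) ^ n)⁻¹ * ∏ i, (p i : ℝ) ^ ((e i : ℤ) - k1 i - k2 i))) :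
    ((((2 ^ n * ∏ i, p i ^ k1 i : ℕ) : ℝ) * t
          + ((∏ i, p i ^ (e i - k1 i) : ℕ) : ℝ))
        * (4 * ((2 ^ n * ∏ i, p i ^ k2 i : ℕ) : ℝ) * t)
      - (((2 ^ n * ∏ i, p i ^ k2 i : ℕ) : ℝ) * t
          + ((∏ i, p i ^ (e i - k2 i) : ℕ) : ℝ))
        * (4 * ((2 ^ n * ∏ i, p i ^ k1 i : ℕ) : ℝ) * t) = 0
      ↔ ∏ i, p i ^ (e i - k1 i) = ∏ i, p i ^ (e i - k2 i))
    ∧ ((∏ i, p i ^ (e i - k1 i) = ∏ i, p i ^ (e i - k2 i)) ↔ k1 = k2) := by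
  have hpos : ∀ k : Fin P → ℕ, 0 < ∏ i, p i ^ k i :=
    fun k => prod_pos fun i _ => pow_pos (hp i).pos _
  have ht0 : t ≠ 0 := by
    have h : ((2 : ℝ) ^ n)⁻¹ * ∏ i, (p i : ℝ) ^ ((e i : ℤ) - k1 i - k2 i) ≠ 0 :=
      mul_ne_zero (by positivity)
        (prod_ne_zero_iff.2 fun i _ => zpow_ne_zero _ (Nat.cast_ne_zero.2 (hp i).ne_zero))
    rcases ht with rfl | rfl
    exacts [h, neg_ne_zero.2 h]
  have hab : (2 ^ n * ∏ i, p i ^ k1 i) * ∏ i, p i ^ (e i - k1 i)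
      = (2 ^ n * ∏ i, p i ^ k2 i) * ∏ i, p i ^ (e i - k2 i) := by
    rw [mul_assoc, mul_assoc, prod_pow_mul_prod_pow_sub p hk1, prod_pow_mul_prod_pow_sub p hk2]
  refine ⟨?_, prod_pow_sub_eq_iff hp hinj hk1 hk2⟩
  have ha₁ : ((2 ^ n * ∏ i, p i ^ k1 i : ℕ) : ℝ) ≠ 0 :=
    Nat.cast_ne_zero.2 (mul_pos (by positivity) (hpos k1)).ne'
  rw [det_coeff_vectors_eq_zero_iff ht0 ha₁ (by exact_mod_cast hpos _) (by exact_mod_cast hpos _)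
    (by exact_mod_cast hab), Nat.cast_inj]

/-- The determinant of the two coefficient vectors at an intersection point
vanishes iff `∏ pᵢ^{nᵢ-kᵢ¹} = ∏ pᵢ^{nᵢ-kᵢ²}`, which holds iff `π¹ = π²`. -/
theorem stmt_6 (n P : ℕ) (p e : Fin P → ℕ)
    (hn : 1 ≤ n)
    (hp : ∀ i, (p i).Prime) (hodd : ∀ i, Odd (p i))
    (hinj : Function.Injective p)
    (k1 k2 : Fin P → ℕ) (hk1 : ∀ i, k1 i ≤ e i) (hk2 : ∀ i, k2 i ≤ e i)
    (t : ℝ)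
    (ht : t = ((2 : ℝ) ^ n)⁻¹ * ∏ i, (p i : ℝ) ^ ((e i : ℤ) - k1 i - k2 i)
      ∨ t = -(((2 : ℝ) ^ n)⁻¹ * ∏ i, (p i : ℝ) ^ ((e i : ℤ) - k1 i - k2 i))) :
    ((((2 ^ n * ∏ i, p i ^ k1 i : ℕ) : ℝ) * t
          + ((∏ i, p i ^ (e i - k1 i) : ℕ) : ℝ))
        * (4 * ((2 ^ n * ∏ i, p i ^ k2 i : ℕ) : ℝ) * t)
      - (((2 ^ n * ∏ i, p i ^ k2 i : ℕ) : ℝ) * t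
          + ((∏ i, p i ^ (e i - k2 i) : ℕ) : ℝ))
        * (4 * ((2 ^ n * ∏ i, p i ^ k1 i : ℕ) : ℝ) * t) = 0
      ↔ ∏ i, p i ^ (e i - k1 i) = ∏ i, p i ^ (e i - k2 i))
    ∧ ((∏ i, p i ^ (e i - k1 i) = ∏ i, p i ^ (e i - k2 i)) ↔ k1 = k2) :=
  stmt_6_general n P p e hp hinj k1 k2 hk1 hk2 t ht
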